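/- arXiv:2104.01816 — 5 statements merged into one kernel-verified Lean document; each statement's English description precedes it below -/
import Mathlib

section
/- Let G : D ⥤ C be a functor admitting a left adjoint, and let K : C ⥤ C' be a conservative functor. If the composite functor K ∘ G : D ⥤ C' is monadic, then G is monadic. -/
/-!
By Beck's theorem it suffices that `D` has, `G` preserves and `G` reflects coequalizers of
`G`-split pairs. A `G`-split pair is `G ⋙ K`-split, so the monadic functor `G ⋙ K` creates its
coequalizer; this gives existence, and reflection follows because `K` preserves the split
coequalizer in `C`. For preservation, a split coequalizer is absolute, so `K` preserves it, and a
conservative functor reflects every colimit it preserves whose diagram has a colimit.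
-/

open CategoryTheory

universe v u₁ u₂ u₃

namespace CategoryTheory

open Limits

variable {D : Type u₁} {C : Type u₂} {C' : Type u₃}
  [Category.{v} D] [Category.{v} C] [Category.{v} C'] (G : D ⥤ C) (K : C ⥤ C')

section SplitPair

variable {A B : D} (f g : A ⟶ B) [G.IsSplitPair f g]

instance Functor.IsSplitPair.comp : (G ⋙ K).IsSplitPair f g :=
  inferInstanceAs (HasSplitCoequalizer (K.map (G.map f)) (K.map (G.map g)))

instance hasColimit_parallelPair_comp_of_isSplitPair : HasColimit (parallelPair f g ⋙ G) :=
  (hasColimit_iff_of_iso (diagramIsoParallelPair _)).mpr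
    (inferInstanceAs (HasCoequalizer (G.map f) (G.map g)))

instance preservesColimit_parallelPair_comp_of_isSplitPair :
    PreservesColimit (parallelPair f g ⋙ G) K :=
  (preservesColimit_iff_of_iso_diagram K (diagramIsoParallelPair _)).mpr
    (inferInstanceAs (PreservesColimit (parallelPair (G.map f) (G.map g)) K))

end SplitPair

lemma reflectsColimit_of_comp_of_preserves {J : Type*} [Category J] (F : J ⥤ D)
    [ReflectsColimit F (G ⋙ K)] [PreservesColimit (F ⋙ G) K] : ReflectsColimit F G :=
  ⟨fun h => ⟨isColimitOfReflects (G ⋙ K) (isColimitOfPreserves K h)⟩⟩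

namespace Monad

noncomputable instance createsColimitOfIsSplitPair_of_monadic [MonadicRightAdjoint G] :
    CreatesColimitOfIsSplitPair G :=
  ⟨fun f g _ => createsGSplitCoequalizersOfMonadic G f g⟩

lemma hasCoequalizerOfIsSplitPair_of_comp [CreatesColimitOfIsSplitPair (G ⋙ K)] :
    HasCoequalizerOfIsSplitPair G :=
  ⟨fun f g _ => hasColimit_of_created (parallelPair f g) (G ⋙ K)⟩

lemma preservesColimitOfIsSplitPair_of_comp [CreatesColimitOfIsSplitPair (G ⋙ K)]
    [K.ReflectsIsomorphisms] : PreservesColimitOfIsSplitPair G :=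
  ⟨fun f g _ => by
    have := reflectsColimit_of_reflectsIsomorphisms (parallelPair f g ⋙ G) K
    exact preservesColimit_of_reflects_of_preserves G K⟩

lemma reflectsColimitOfIsSplitPair_of_comp [CreatesColimitOfIsSplitPair (G ⋙ K)] :
    ReflectsColimitOfIsSplitPair G :=
  ⟨fun f g _ => reflectsColimit_of_comp_of_preserves G K (parallelPair f g)⟩

end Monad

end CategoryTheory

theorem monadic_cancel {D : Type u₁} {C : Type u₂} {C' : Type u₃}
    [Category.{v} D] [Category.{v} C] [Category.{v} C']
    (G : D ⥤ C) (K : C ⥤ C')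
    [G.IsRightAdjoint] [K.ReflectsIsomorphisms]
    [MonadicRightAdjoint (G ⋙ K)] :
    Nonempty (MonadicRightAdjoint G) := by
  have := Monad.hasCoequalizerOfIsSplitPair_of_comp G K
  have := Monad.preservesColimitOfIsSplitPair_of_comp G K
  have := Monad.reflectsColimitOfIsSplitPair_of_comp G K
  exact ⟨Monad.monadicOfHasPreservesReflectsGSplitCoequalizers (Adjunction.ofIsRightAdjoint G)⟩
end

section
/- Let G₁ : D ⥤ E and G₀ : E ⥤ C be functors with left adjoints F₁ and F₀ respectively, let G = G₀ ∘ G₁ with left adjoint F = F₁ ∘ F₀, and let T = G∘F be the induced monad on C. Suppose that G₀ is monadic and that the natural transformation G₀∘F₀ → G₀∘G₁∘F₁∘F₀ = T, obtained by whiskering the unit of the adjunction F₁ ⊣ G₁ with G₀ on the left and F₀ on the right, is an isomorphism. Then there is an equivalence of categories between E and the Eilenberg–Moore category Alg(T) of T-algebras, under which G₀ corresponds (up to natural isomorphism) to the forgetful functor Alg(T) ⥤ C and G₁ corresponds to the comparison functor D ⥤ Alg(T) of the adjunction F ⊣ G. -/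
/-!
The whiskered unit `G₀ η₁ F₀ : G₀F₀ ⟶ T` is always a morphism of monads, and restricting the
comparison functor of `F ⊣ G` along it gives `G₁` followed by the comparison functor of `F₀ ⊣ G₀`
(a triangle identity for `F₁ ⊣ G₁`). When it is invertible, algebraEquiv along it is an
equivalence `Alg(T) ≌ Alg(G₀F₀)` over `C`, and composing its inverse with the monadicity
equivalence `E ≌ Alg(G₀F₀)` gives the required equivalence.
-/

open CategoryTheory

universe v u₁ u₂ u₃

namespace CategoryTheory.Adjunction

variable {C E D : Type*} [Category* C] [Category* E] [Category* D]
  {F₀ : C ⥤ E} {G₀ : E ⥤ C} (adj₀ : F₀ ⊣ G₀) {F₁ : E ⥤ D} {G₁ : D ⥤ E} (adj₁ : F₁ ⊣ G₁)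

lemma unit_app_comp_map_comp_counit_app (Y : D) :
    adj₁.unit.app (F₀.obj (G₀.obj (G₁.obj Y))) ≫ G₁.map ((adj₀.comp adj₁).counit.app Y) =
      adj₀.counit.app (G₁.obj Y) := by
  simp [comp_counit_app]

def whiskeredUnitMonadHom : adj₀.toMonad ⟶ (adj₀.comp adj₁).toMonad where
  toNatTrans := Functor.whiskerRight (Functor.whiskerLeft F₀ adj₁.unit) G₀
  app_η X := (adj₀.comp_unit_app adj₁ X).symm
  app_μ X := by
    change G₀.map (adj₀.counit.app (F₀.obj X)) ≫ G₀.map (adj₁.unit.app (F₀.obj X)) =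
      (G₀.map (F₀.map (G₀.map (adj₁.unit.app (F₀.obj X)))) ≫
        G₀.map (adj₁.unit.app (F₀.obj (G₀.obj (G₁.obj (F₁.obj (F₀.obj X))))))) ≫
        G₀.map (G₁.map ((adj₀.comp adj₁).counit.app (F₁.obj (F₀.obj X))))
    simp only [← G₀.map_comp, Category.assoc, unit_app_comp_map_comp_counit_app]
    exact congrArg G₀.map (adj₀.counit_naturality _).symm

lemma isIso_whiskeredUnitMonadHom (h : ∀ X : C, IsIso (G₀.map (adj₁.unit.app (F₀.obj X)))) :
    IsIso (whiskeredUnitMonadHom adj₀ adj₁) :=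
  have : ∀ X, IsIso (((monadToFunctor C).map (whiskeredUnitMonadHom adj₀ adj₁)).app X) := h
  have : IsIso ((monadToFunctor C).map (whiskeredUnitMonadHom adj₀ adj₁)) :=
    NatIso.isIso_of_isIso_app _
  isIso_of_reflects_iso _ (monadToFunctor C)

def comparisonCompAlgebraFunctorIso :
    Monad.comparison (adj₀.comp adj₁) ⋙
        Monad.algebraFunctorOfMonadHom (whiskeredUnitMonadHom adj₀ adj₁) ≅
      G₁ ⋙ Monad.comparison adj₀ :=
  NatIso.ofComponents
    (fun Y => Monad.Algebra.isoMk (Iso.refl _) (by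
      change G₀.map (F₀.map (𝟙 _)) ≫ G₀.map (adj₀.counit.app (G₁.obj Y)) =
        (G₀.map (adj₁.unit.app (F₀.obj (G₀.obj (G₁.obj Y)))) ≫
          G₀.map (G₁.map ((adj₀.comp adj₁).counit.app Y))) ≫ 𝟙 (G₀.obj (G₁.obj Y))
      simp only [← G₀.map_comp, unit_app_comp_map_comp_counit_app, F₀.map_id, Category.id_comp]
      exact (Category.comp_id _).symm))
    (fun _ => by ext; exact (Category.comp_id _).trans (Category.id_comp _).symm)

end CategoryTheory.Adjunction

theorem char_mnd {C : Type u₁} {E : Type u₂} {D : Type u₃}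
    [Category.{v} C] [Category.{v} E] [Category.{v} D]
    {F₀ : C ⥤ E} {G₀ : E ⥤ C} (adj₀ : F₀ ⊣ G₀)
    {F₁ : E ⥤ D} {G₁ : D ⥤ E} (adj₁ : F₁ ⊣ G₁)
    (hmonadic : (Monad.comparison adj₀).IsEquivalence)
    (hunit : ∀ X : C, IsIso (G₀.map (adj₁.unit.app (F₀.obj X)))) :
    ∃ e : E ≌ (adj₀.comp adj₁).toMonad.Algebra,
      Nonempty (e.functor ⋙ (adj₀.comp adj₁).toMonad.forget ≅ G₀) ∧
      Nonempty (G₁ ⋙ e.functor ≅ Monad.comparison (adj₀.comp adj₁)) := by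
  have := adj₀.isIso_whiskeredUnitMonadHom adj₁ hunit
  let algebraEquiv := Monad.algebraEquivOfIsoMonads (asIso (adj₀.whiskeredUnitMonadHom adj₁))
  exact ⟨(Monad.comparison adj₀).asEquivalence.trans algebraEquiv,
    ⟨Monad.comparisonForget adj₀⟩,
    ⟨Iso.compInverseIso (H := algebraEquiv.symm)
      (adj₀.comparisonCompAlgebraFunctorIso adj₁).symm⟩⟩
end

section
/- Let F ⊣ G be an adjunction with F : C ⥤ D and counit ε, let J be a small category, and let Y : J ⥤ D be a diagram such that for every object j of J the counit morphism ε_{Y(j)} : F G Y(j) → Y(j) is an isomorphism. Suppose the colimit of Y exists in D and the colimit of the composite G∘Y exists in C. Then the canonical morphism F(colim (G∘Y)) → colim Y (induced by the isomorphisms ε_{Y(j)} and the fact that F preserves colimits) is an isomorphism; in particular, colim Y lies in the essential image of F. -/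
/-!
Since `F` is a left adjoint it preserves colimits, so `F (colim (G ∘ Y)) ≅ colim (F ∘ G ∘ Y)`,
and the counit, being an isomorphism on every `Y j`, is a natural isomorphism `F ∘ G ∘ Y ≅ Y`,
hence induces `colim (F ∘ G ∘ Y) ≅ colim Y`. The canonical morphism is the composite of these two
isomorphisms, which is checked on the colimit injections.
-/

open CategoryTheory CategoryTheory.Limits

universe w v u₁ u₂

namespace CategoryTheory.Adjunction

variable {C : Type u₁} {D : Type u₂} [Category.{v} C] [Category.{v} D]
  {F : C ⥤ D} {G : D ⥤ C} (adj : F ⊣ G) {J : Type*} [Category J] (Y : J ⥤ D)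
  [HasColimit Y] [HasColimit (Y ⋙ G)]

theorem colimit_post_comp_map_post_comp_counit [HasColimit ((Y ⋙ G) ⋙ F)] :
    colimit.post (Y ⋙ G) F ≫ F.map (colimit.post Y G) ≫ adj.counit.app (colimit Y) =
      colimMap (G := (Y ⋙ G) ⋙ F) (F := Y) (Functor.whiskerLeft Y adj.counit) := by
  ext j
  simp [← F.map_comp_assoc]

theorem isIso_map_post_comp_counit (hcounit : ∀ j : J, IsIso (adj.counit.app (Y.obj j))) :
    IsIso (F.map (colimit.post Y G) ≫ adj.counit.app (colimit Y)) := by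
  have : PreservesColimitsOfShape J F := by
    have := adj.leftAdjoint_preservesColimits
    infer_instance
  have : ∀ j, IsIso ((Functor.whiskerLeft Y adj.counit).app j) := hcounit
  have : IsIso (Functor.whiskerLeft Y adj.counit) := NatIso.isIso_of_isIso_app _
  have : IsIso (colimit.post (Y ⋙ G) F ≫ F.map (colimit.post Y G) ≫
      adj.counit.app (colimit Y)) := by
    rw [adj.colimit_post_comp_map_post_comp_counit Y]
    exact isIso_colimMap _
  exact IsIso.of_isIso_comp_left (colimit.post (Y ⋙ G) F) _

end CategoryTheory.Adjunction

theorem cmpl2free {C : Type u₁} {D : Type u₂} [Category.{v} C] [Category.{v} D]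
    {F : C ⥤ D} {G : D ⥤ C} (adj : F ⊣ G)
    {J : Type w} [SmallCategory J] (Y : J ⥤ D)
    [HasColimit Y] [HasColimit (Y ⋙ G)]
    (hcounit : ∀ j : J, IsIso (adj.counit.app (Y.obj j))) :
    IsIso (F.map (colimit.post Y G) ≫ adj.counit.app (colimit Y)) ∧
      F.essImage (colimit Y) := by
  have := adj.isIso_map_post_comp_counit Y hcounit
  exact ⟨this, Functor.essImage.ofIso
    (asIso (F.map (colimit.post Y G) ≫ adj.counit.app (colimit Y))) (F.obj_mem_essImage _)⟩
end

section
/- Let C be a category and S a set of objects of C. If S generates C under colimits, then S is a detecting set: every morphism f : X → Y of C such that composition with f induces a bijection Hom(Z, X) → Hom(Z, Y) for every Z ∈ S is an isomorphism. -/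
open CategoryTheory CategoryTheory.Limits

universe w v u

namespace Paper

/-- A full subcategory (given by a set of objects) is closed under isomorphisms. -/
def IsoClosed {C : Type*} [Category C] (P : Set C) : Prop :=
  ∀ ⦃X Y : C⦄, X ∈ P → Nonempty (X ≅ Y) → Y ∈ P

/-- A set of objects is closed under all colimits of shapes `J : Type w` that exist in `C`:
whenever a diagram valued in `P` admits a colimit cocone, its point belongs to `P`. -/
def ColimitClosed {C : Type u} [Category.{v} C] (P : Set C) : Prop :=
  ∀ (J : Type w) (_ : SmallCategory J) (F : J ⥤ C) (c : Cocone F),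
    Nonempty (IsColimit c) → (∀ j : J, F.obj j ∈ P) → c.pt ∈ P

/-- A set of objects is closed under all limits of shapes `J : Type w` that exist in `C`. -/
def LimitClosed {C : Type u} [Category.{v} C] (P : Set C) : Prop :=
  ∀ (J : Type w) (_ : SmallCategory J) (F : J ⥤ C) (c : Cone F),
    Nonempty (IsLimit c) → (∀ j : J, F.obj j ∈ P) → c.pt ∈ P

/-- `S` generates `C` under colimits: the only set of objects containing `S` which is
closed under isomorphisms and under all colimits that exist in `C` is all of `C`. -/
def GeneratesUnderColimits {C : Type u} [Category.{v} C] (S : Set C) : Prop :=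
  ∀ P : Set C, S ⊆ P → IsoClosed P → ColimitClosed.{w} P → ∀ X : C, X ∈ P

/-- The smallest set of objects containing `S` which is closed under isomorphisms and
under all colimits (of shapes in `Type w`) that exist in `C`. -/
def colimitClosure {C : Type u} [Category.{v} C] (S : Set C) : Set C :=
  ⋂₀ {P : Set C | S ⊆ P ∧ IsoClosed P ∧ ColimitClosed.{w} P}

/-- A category `J` is `κ`-filtered if every diagram indexed by a small category with
fewer than `κ` arrows admits a cocone. -/
def IsCardinalFiltered (J : Type w) [SmallCategory J] (κ : Cardinal.{w}) : Prop :=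
  ∀ (K : Type w) (_ : SmallCategory K) (F : K ⥤ J),
    Cardinal.mk (Arrow K) < κ → Nonempty (Cocone F)

/-- A set of objects is closed under colimits of `κ`-filtered shapes that exist in `C`. -/
def FilteredColimitClosed {C : Type u} [Category.{v} C] (κ : Cardinal.{w}) (P : Set C) :
    Prop :=
  ∀ (J : Type w) (_ : SmallCategory J), IsCardinalFiltered J κ →
    ∀ (F : J ⥤ C) (c : Cocone F),
      Nonempty (IsColimit c) → (∀ j : J, F.obj j ∈ P) → c.pt ∈ P

/-- An object `X` of a large category `C` is `κ`-presentable if its Hom-functor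
`Hom(X, -) : C ⥤ Type u` preserves colimits of `κ`-filtered (small) shapes. -/
def IsPresentableObj {C : Type (u + 1)} [Category.{u} C] (κ : Cardinal.{u}) (X : C) : Prop :=
  ∀ (J : Type u) (_ : SmallCategory J), IsCardinalFiltered J κ →
    PreservesColimitsOfShape J (coyoneda.obj (Opposite.op X))

/-- A large category `C` is locally presentable if it has all small colimits and there is
a regular cardinal `κ` such that `C` has, up to isomorphism, only a small set of
`κ`-presentable objects and every object of `C` is a `κ`-filtered colimit of
`κ`-presentable objects. -/
def LocallyPresentable (C : Type (u + 1)) [Category.{u} C] : Prop :=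
  HasColimits C ∧
    ∃ κ : Cardinal.{u}, κ.IsRegular ∧
      (∃ S : Set C, Small.{u} S ∧
        ∀ X : C, IsPresentableObj κ X → ∃ Y ∈ S, Nonempty (X ≅ Y)) ∧
      ∀ X : C, ∃ (J : Type u) (_ : SmallCategory J) (F : J ⥤ C) (c : Cocone F),
        IsCardinalFiltered J κ ∧ (∀ j : J, IsPresentableObj κ (F.obj j)) ∧
        c.pt = X ∧ Nonempty (IsColimit c)

end Paper

namespace Paper

/-!
STATEMENT 6: If a set of objects `S` generates `C` under colimits, then `S` is a
detecting set: any morphism `f : X ⟶ Y` such that composition with `f` induces a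
bijection `Hom(Z, X) → Hom(Z, Y)` for all `Z ∈ S` is an isomorphism.
-/

theorem generates_implies_detecting {C : Type u} [Category.{v} C] (S : Set C)
    (hgen : GeneratesUnderColimits.{w} S) {X Y : C} (f : X ⟶ Y)
    (hf : ∀ Z ∈ S, Function.Bijective fun g : Z ⟶ X => g ≫ f) :
    IsIso f := by
  set P : Set C := {Z : C | Function.Bijective fun g : Z ⟶ X => g ≫ f} with hP
  have hSP : S ⊆ P := fun Z hZ => hf Z hZ
  have hIso : IsoClosed P := by
    rintro Z W hZ ⟨e⟩
    constructor
    · intro g₁ g₂ h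
      have h' : g₁ ≫ f = g₂ ≫ f := h
      have := hZ.1 (a₁ := e.hom ≫ g₁) (a₂ := e.hom ≫ g₂) (by
        simp only [Category.assoc]; rw [h'])
      calc g₁ = e.inv ≫ (e.hom ≫ g₁) := by simp
        _ = e.inv ≫ (e.hom ≫ g₂) := by rw [this]
        _ = g₂ := by simp
    · intro h
      obtain ⟨g, hg⟩ := hZ.2 (e.hom ≫ h)
      exact ⟨e.inv ≫ g, by simp only [Category.assoc, hg]; simp⟩
  have hColim : ColimitClosed.{w} P := by
    rintro J _ F c ⟨hc⟩ hj
    constructor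
    · intro g₁ g₂ h
      have h' : g₁ ≫ f = g₂ ≫ f := h
      refine hc.hom_ext fun j => ?_
      exact (hj j).1 (by simp only [Category.assoc]; rw [h'])
    · intro h
      choose g hg using fun j => (hj j).2 (c.ι.app j ≫ h)
      have : ∀ {j j' : J} (φ : j ⟶ j'), F.map φ ≫ g j' = g j := by
        intro j j' φ
        apply (hj j).1
        simp only [Category.assoc, hg]
        rw [← Category.assoc, c.w φ]
      refine ⟨hc.desc ⟨X, ⟨g, fun j j' φ => by simp [this φ]⟩⟩, ?_⟩
      refine hc.hom_ext fun j => ?_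
      simp only [← Category.assoc, hc.fac]
      exact hg j
  have hXP : X ∈ P := hgen P hSP hIso hColim X
  have hYP : Y ∈ P := hgen P hSP hIso hColim Y
  obtain ⟨g, hg⟩ := hYP.2 (𝟙 Y)
  have hfg : f ≫ g = 𝟙 X := by
    apply hXP.1
    simp only [Category.assoc, hg]
    simp
  exact ⟨g, hfg, hg⟩

end Paper
end

section
/- Let C be a locally presentable category and G : D ⥤ C a functor admitting a left adjoint F. If for every regular cardinal κ, the only full subcategory of C containing the essential image of G that is closed under isomorphisms, under small limits, and under κ-filtered colimits is C itself, then F is conservative. -/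
open CategoryTheory CategoryTheory.Limits

universe w v u

/-! If `F.map f` is invertible, adjunction shows that every object `G.obj Z` is local for `f`,
i.e. precomposition with `f` is a bijection `(Y ⟶ G.obj Z) ≃ (X ⟶ G.obj Z)`. Local objects are
closed under isomorphisms and limits, and under `κ`-filtered colimits as soon as `X` and `Y` are
`κ`-presentable, which holds for some regular `κ` because `C` is locally presentable. So every
object is local, in particular `X` and `Y`, and Yoneda makes `f` an isomorphism. -/

namespace Paper

lemma isCardinalFiltered_iff (J : Type w) [SmallCategory J] (κ : Cardinal.{w})
    [Fact κ.IsRegular] :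
    IsCardinalFiltered J κ ↔ CategoryTheory.IsCardinalFiltered J κ := by
  simp only [IsCardinalFiltered, ← hasCardinalLT_iff_cardinal_mk_lt]
  exact ⟨fun h => ⟨fun F hF => h _ _ F hF⟩, fun h _ _ F hF => h.nonempty_cocone F hF⟩

lemma IsPresentableObj.isCardinalPresentable {C : Type (u + 1)} [Category.{u} C]
    {κ : Cardinal.{u}} [Fact κ.IsRegular] {X : C} (hX : IsPresentableObj κ X) :
    IsCardinalPresentable X κ where
  preservesColimitOfShape J _ _ := hX J _ ((isCardinalFiltered_iff J κ).2 ‹_›)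

lemma LocallyPresentable.isCardinalFilteredGenerator {C : Type (u + 1)} [Category.{u} C]
    (hC : LocallyPresentable C) :
    ∃ (κ : Cardinal.{u}) (_ : Fact κ.IsRegular),
      ObjectProperty.IsCardinalFilteredGenerator (IsPresentableObj κ : ObjectProperty C) κ := by
  obtain ⟨-, κ, hκ, -, hcolim⟩ := hC
  have : Fact κ.IsRegular := ⟨hκ⟩
  refine ⟨κ, this, fun X hX => hX.isCardinalPresentable, fun X => ?_⟩
  obtain ⟨J, _, K, c, hJ, hK, rfl, ⟨hc⟩⟩ := hcolim X
  exact ⟨J, _, (isCardinalFiltered_iff J κ).1 hJ, ⟨⟨⟨K, c.ι, hc⟩, hK⟩⟩⟩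

lemma LocallyPresentable.exists_isCardinalPresentable {C : Type (u + 1)} [Category.{u} C]
    (hC : LocallyPresentable C) (X Y : C) :
    ∃ (κ : Cardinal.{u}) (_ : Fact κ.IsRegular),
      IsCardinalPresentable X κ ∧ IsCardinalPresentable Y κ := by
  obtain ⟨κ, _, hgen⟩ := hC.isCardinalFilteredGenerator
  obtain ⟨κX, _, _⟩ := (hgen.presentable X).exists_cardinal
  obtain ⟨κY, _, _⟩ := (hgen.presentable Y).exists_cardinal
  have : Fact (max κX κY).IsRegular := by
    rcases max_choice κX κY with h | h <;> rw [h] <;> assumption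
  exact ⟨max κX κY, this, isCardinalPresentable_of_le X (le_max_left _ _),
    isCardinalPresentable_of_le Y (le_max_right _ _)⟩

lemma isoClosed_of_isClosedUnderIsomorphisms {C : Type*} [Category C] (P : ObjectProperty C)
    [P.IsClosedUnderIsomorphisms] : IsoClosed {X | P X} :=
  fun _ _ hX ⟨e⟩ => P.prop_of_iso e hX

lemma limitClosed_of_isClosedUnderLimitsOfShape {C : Type u} [Category.{v} C]
    (P : ObjectProperty C) [∀ (J : Type w) [SmallCategory J], P.IsClosedUnderLimitsOfShape J] :
    LimitClosed.{w} {X | P X} :=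
  fun _ _ _ _ ⟨hc⟩ hF => P.prop_of_isLimit hc hF

lemma filteredColimitClosed_of_isClosedUnderColimitsOfShape {C : Type u} [Category.{v} C]
    {κ : Cardinal.{w}} [Fact κ.IsRegular] (P : ObjectProperty C)
    (hP : ∀ (J : Type w) [SmallCategory J] [CategoryTheory.IsCardinalFiltered J κ],
      P.IsClosedUnderColimitsOfShape J) :
    FilteredColimitClosed κ {X | P X} := by
  intro J _ hJ _ _ ⟨hc⟩ hF
  have := (isCardinalFiltered_iff J κ).1 hJ
  have := hP J
  exact P.prop_of_isColimit hc hF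

lemma isLocal_rightAdjoint_obj {C D : Type*} [Category C] [Category D] {F : C ⥤ D} {G : D ⥤ C}
    (adj : F ⊣ G) {W : MorphismProperty C} (hW : ∀ ⦃X Y : C⦄ (f : X ⟶ Y), W f → IsIso (F.map f))
    (Z : D) : W.isLocal (G.obj Z) := by
  intro X Y f hf
  have : IsIso (F.map f) := hW f hf
  have hprecomp : (fun g : Y ⟶ G.obj Z => f ≫ g) =
      adj.homEquiv X Z ∘ (fun g => F.map f ≫ g) ∘ (adj.homEquiv Y Z).symm := by
    funext g
    simp [Adjunction.homEquiv_naturality_left]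
  rw [hprecomp]
  exact (adj.homEquiv X Z).bijective.comp
    ((asIso (F.map f)).symm.homFromEquiv.bijective.comp (adj.homEquiv Y Z).symm.bijective)

lemma essImage_subset_isLocal {C D : Type*} [Category C] [Category D] {F : C ⥤ D} {G : D ⥤ C}
    (adj : F ⊣ G) {W : MorphismProperty C} (hW : ∀ ⦃X Y : C⦄ (f : X ⟶ Y), W f → IsIso (F.map f)) :
    {Z | G.essImage Z} ⊆ {Z | W.isLocal Z} :=
  fun _ ⟨Z, ⟨e⟩⟩ => W.isLocal.prop_of_iso e (isLocal_rightAdjoint_obj adj hW Z)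

lemma isIso_of_isLocal {C : Type*} [Category C] {W : MorphismProperty C}
    {X Y : C} {f : X ⟶ Y} (hf : W f) (hX : W.isLocal X) (hY : W.isLocal Y) : IsIso f :=
  (W.isLocal.isLocal_iff_isIso f hX hY).1 (W.le_isLocal_isLocal f hf)

theorem prr_epi_mono {C D : Type (u + 1)} [Category.{u} C] [Category.{u} D]
    (hC : LocallyPresentable C)
    {F : C ⥤ D} {G : D ⥤ C} (adj : F ⊣ G)
    (hgen : ∀ κ : Cardinal.{u}, κ.IsRegular →
      ∀ P : Set C, setOf G.essImage ⊆ P → IsoClosed P → LimitClosed.{u} P →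
        FilteredColimitClosed.{u} κ P → ∀ X : C, X ∈ P) :
    F.ReflectsIsomorphisms := by
  refine ⟨fun {X Y} f _ => ?_⟩
  obtain ⟨κ, hκ, hX, hY⟩ := hC.exists_isCardinalPresentable X Y
  let W := MorphismProperty.ofHoms fun _ : Unit => f
  have hf : W f := ⟨()⟩
  have hlocal := hgen κ hκ.out {Z | W.isLocal Z}
    (essImage_subset_isLocal adj (by rintro _ _ _ ⟨⟩; assumption))
    (isoClosed_of_isClosedUnderIsomorphisms W.isLocal)
    (limitClosed_of_isClosedUnderLimitsOfShape W.isLocal)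
    (filteredColimitClosed_of_isClosedUnderColimitsOfShape W.isLocal fun J _ _ =>
      W.isClosedUnderColimitsOfShape_isLocal J κ (by rintro _ _ _ ⟨⟩; exact ⟨hX, hY⟩))
  exact isIso_of_isLocal hf (hlocal X) (hlocal Y)

end Paper
end
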